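/- arXiv:2112.11368 — 5 statements merged into one kernel-verified Lean document; each statement's English description precedes it below -/
import Mathlib

section
/- Let V be a complex Hilbert space, a : V × V → ℂ a bounded sesquilinear form with bound C_a that satisfies the inf-sup condition with constant α > 0 (for every u ∈ V, sup over v ≠ 0 of Re a(u,v)/‖v‖ ≥ α‖u‖), and let V₀ ⊆ V be a closed subspace on which a is coercive with constant c > 0. Let Y := {y ∈ V : a(w, y) = 0 for all w ∈ V₀}, let g : V → ℂ be a bounded conjugate-linear functional, let φ ∈ V satisfy a(φ, v) = g(v) for all v ∈ V, and let φ^loc ∈ V₀ satisfy a(φ^loc, v) = g(v) for all v ∈ V₀. Then, with ‖g‖_{Y'} := sup over y ∈ Y, y ≠ 0, of |g(y)|/‖y‖, the localization error satisfies the two-sided bound α·‖φ − φ^loc‖ ≤ (1 + C_a/c)·‖g‖_{Y'} and ‖g‖_{Y'} ≤ C_a·‖φ − φ^loc‖. -/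
/-!
Write `e := φ - φ^loc`. Galerkin orthogonality gives `a(e, v) = 0` on `V₀` and `a(e, y) = g(y)` on
`Y`, so `‖g‖_{Y'} ≤ C_a‖e‖` is just boundedness of `a`. Conversely, by Lax–Milgram on `V₀` every
`w ∈ V` splits as `w = w₀ + y` with `w₀ ∈ V₀`, `y ∈ Y` and `‖w₀‖ ≤ (C_a/c)‖w‖`; hence
`a(e, w) = g(y)` is bounded by `(1 + C_a/c)‖g‖_{Y'}‖w‖`, and the inf-sup condition turns this into
the bound on `α‖e‖`.
-/

open InnerProductSpace

section LaxMilgram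

variable {𝕜 E : Type*} [RCLike 𝕜] [NormedAddCommGroup E] [InnerProductSpace 𝕜 E] [CompleteSpace E]
  {B : E →L⋆[𝕜] E →L[𝕜] 𝕜} {c : ℝ}

local postfix:1024 "♯" => continuousLinearMapOfBilin (𝕜 := 𝕜)

theorem mul_norm_le_norm_continuousLinearMapOfBilin
    (hB : ∀ x, c * ‖x‖ ^ 2 ≤ RCLike.re (B x x)) (x : E) : c * ‖x‖ ≤ ‖B♯ x‖ := by
  rcases eq_or_ne x 0 with rfl | hx
  · simp
  refine le_of_mul_le_mul_right ?_ (norm_pos_iff.2 hx)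
  calc c * ‖x‖ * ‖x‖ = c * ‖x‖ ^ 2 := by ring
    _ ≤ RCLike.re (B x x) := hB x
    _ = RCLike.re ⟪B♯ x, x⟫_𝕜 := by rw [continuousLinearMapOfBilin_apply]
    _ ≤ ‖B♯ x‖ * ‖x‖ := (RCLike.re_le_norm _).trans (norm_inner_le_norm _ _)

theorem surjective_continuousLinearMapOfBilin (hc : 0 < c)
    (hB : ∀ x, c * ‖x‖ ^ 2 ≤ RCLike.re (B x x)) : Function.Surjective B♯ := by
  have hanti : AntilipschitzWith c⁻¹.toNNReal B♯ :=
    ContinuousLinearMap.antilipschitz_of_bound _ fun x => by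
      rw [Real.coe_toNNReal _ (inv_nonneg.2 hc.le), ← div_eq_inv_mul, le_div_iff₀ hc, mul_comm]
      exact mul_norm_le_norm_continuousLinearMapOfBilin hB x
  have hclosed : IsClosed ((B♯ : E →ₗ[𝕜] E).range : Set E) := by
    rw [LinearMap.coe_range]
    exact hanti.isClosed_range B♯.uniformContinuous
  have := hclosed.completeSpace_coe
  suffices (B♯ : E →ₗ[𝕜] E).range = ⊤ from LinearMap.range_eq_top.1 this
  rw [← Submodule.orthogonal_eq_bot_iff, Submodule.eq_bot_iff]
  intro x hx
  have hx0 : ⟪B♯ x, x⟫_𝕜 = 0 := hx _ ⟨x, rfl⟩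
  have hBx := hB x
  rw [← continuousLinearMapOfBilin_apply, hx0, map_zero] at hBx
  by_contra hne
  exact (mul_pos hc (pow_pos (norm_pos_iff.2 hne) 2)).not_ge hBx

theorem exists_forall_apply_eq_of_coercive (hc : 0 < c)
    (hB : ∀ x, c * ‖x‖ ^ 2 ≤ RCLike.re (B x x)) (f : StrongDual 𝕜 E) :
    ∃ x, ∀ v, B x v = f v := by
  obtain ⟨x, hx⟩ := surjective_continuousLinearMapOfBilin hc hB ((toDual 𝕜 E).symm f)
  exact ⟨x, fun v => by rw [← continuousLinearMapOfBilin_apply, hx, toDual_symm_apply]⟩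

end LaxMilgram

section DualNormOn

variable {E F : Type*} [NormedAddCommGroup E] [SeminormedAddCommGroup F]

/-- `dualNormOn P g` is `‖g‖_{Y'}` for `Y = {y | P y}`. -/
noncomputable def dualNormOn (P : E → Prop) (g : E → F) : ℝ :=
  ⨆ y : {y : E // P y ∧ y ≠ 0}, ‖g y.1‖ / ‖y.1‖

variable {P : E → Prop} {g g' : E → F} {M : ℝ}

theorem dualNormOn_nonneg : 0 ≤ dualNormOn P g :=
  Real.iSup_nonneg fun _ => div_nonneg (norm_nonneg _) (norm_nonneg _)

theorem dualNormOn_congr (h : ∀ y, P y → g y = g' y) : dualNormOn P g = dualNormOn P g' :=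
  iSup_congr fun y => by rw [h y y.2.1]

theorem dualNormOn_le (hM : 0 ≤ M) (h : ∀ y, P y → ‖g y‖ ≤ M * ‖y‖) : dualNormOn P g ≤ M :=
  Real.iSup_le (fun y => (div_le_iff₀ (norm_pos_iff.2 y.2.2)).2 (h y y.2.1)) hM

theorem norm_le_dualNormOn_mul (h : ∀ y, P y → ‖g y‖ ≤ M * ‖y‖) {y : E} (hy : P y) :
    ‖g y‖ ≤ dualNormOn P g * ‖y‖ := by
  rcases eq_or_ne y 0 with rfl | hy0
  · simpa using h 0 hy
  have hbdd : BddAbove (Set.range fun y : {y : E // P y ∧ y ≠ 0} => ‖g y.1‖ / ‖y.1‖) :=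
    ⟨M, Set.forall_mem_range.2 fun y => (div_le_iff₀ (norm_pos_iff.2 y.2.2)).2 (h y y.2.1)⟩
  exact (div_le_iff₀ (norm_pos_iff.2 hy0)).1 (le_ciSup hbdd ⟨y, hy, hy0⟩)

end DualNormOn

section SesquilinearForm

variable {V : Type*} [NormedAddCommGroup V] [InnerProductSpace ℂ V]
  (a : V →ₗ[ℂ] V →ₗ⋆[ℂ] ℂ) (V₀ : Submodule ℂ V) {Ca c : ℝ}

theorem exists_mem_forall_apply_eq [CompleteSpace V]
    (hbound : ∀ u w : V, ‖a u w‖ ≤ Ca * ‖u‖ * ‖w‖) (hV₀ : IsClosed (V₀ : Set V)) (hc : 0 < c)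
    (hcoerc : ∀ w ∈ V₀, c * ‖w‖ ^ 2 ≤ (a w w).re) (w : V) :
    ∃ w₀ ∈ V₀, ∀ v ∈ V₀, a v w₀ = a v w := by
  have := hV₀.completeSpace_coe
  let B : V₀ →L⋆[ℂ] V₀ →L[ℂ] ℂ := (a.domRestrict₁₂ V₀ V₀).flip.mkContinuous₂ Ca fun x v =>
    (hbound v x).trans_eq (by simp only [Submodule.coe_norm]; ring)
  let f : StrongDual ℂ V₀ := ((a.flip w).domRestrict V₀).mkContinuous (Ca * ‖w‖) fun v =>
    (hbound v w).trans_eq (by simp only [Submodule.coe_norm]; ring)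
  obtain ⟨w₀, hw₀⟩ := exists_forall_apply_eq_of_coercive hc (B := B) (fun x => hcoerc x x.2) f
  exact ⟨w₀, w₀.2, fun v hv => hw₀ ⟨v, hv⟩⟩

theorem norm_le_div_mul_norm_of_forall_apply_eq (hbound : ∀ u w : V, ‖a u w‖ ≤ Ca * ‖u‖ * ‖w‖)
    (hCa : 0 ≤ Ca) (hc : 0 < c) (hcoerc : ∀ w ∈ V₀, c * ‖w‖ ^ 2 ≤ (a w w).re) {w w₀ : V}
    (hw₀ : w₀ ∈ V₀) (hproj : ∀ v ∈ V₀, a v w₀ = a v w) : ‖w₀‖ ≤ Ca / c * ‖w‖ := by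
  rw [div_mul_eq_mul_div, le_div_iff₀ hc]
  rcases eq_or_ne w₀ 0 with rfl | hw₀0
  · simpa using mul_nonneg hCa (norm_nonneg w)
  refine le_of_mul_le_mul_right ?_ (norm_pos_iff.2 hw₀0)
  calc ‖w₀‖ * c * ‖w₀‖ = c * ‖w₀‖ ^ 2 := by ring
    _ ≤ (a w₀ w₀).re := hcoerc w₀ hw₀
    _ = (a w₀ w).re := by rw [hproj w₀ hw₀]
    _ ≤ Ca * ‖w₀‖ * ‖w‖ := (Complex.re_le_norm _).trans (hbound w₀ w)
    _ = Ca * ‖w‖ * ‖w₀‖ := by ring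

theorem norm_apply_le_dualNormOn_mul [CompleteSpace V]
    (hbound : ∀ u w : V, ‖a u w‖ ≤ Ca * ‖u‖ * ‖w‖) (hCa : 0 ≤ Ca) (hV₀ : IsClosed (V₀ : Set V))
    (hc : 0 < c) (hcoerc : ∀ w ∈ V₀, c * ‖w‖ ^ 2 ≤ (a w w).re) {e : V}
    (he : ∀ v ∈ V₀, a e v = 0) (w : V) :
    ‖a e w‖ ≤ (1 + Ca / c) * dualNormOn (fun y => ∀ v ∈ V₀, a v y = 0) (a e) * ‖w‖ := by
  obtain ⟨w₀, hw₀, hproj⟩ := exists_mem_forall_apply_eq a V₀ hbound hV₀ hc hcoerc w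
  have hY : ∀ v ∈ V₀, a v (w - w₀) = 0 := fun v hv => by rw [map_sub, hproj v hv, sub_self]
  have hw₀_le := norm_le_div_mul_norm_of_forall_apply_eq a V₀ hbound hCa hc hcoerc hw₀ hproj
  set T := dualNormOn (fun y => ∀ v ∈ V₀, a v y = 0) (a e)
  calc ‖a e w‖ = ‖a e (w - w₀)‖ := by rw [map_sub, he w₀ hw₀, sub_zero]
    _ ≤ T * ‖w - w₀‖ := norm_le_dualNormOn_mul (fun y _ => hbound e y) hY
    _ ≤ T * (‖w‖ + Ca / c * ‖w‖) := by
        gcongr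
        · exact dualNormOn_nonneg
        · exact (norm_sub_le w w₀).trans (by gcongr)
    _ = (1 + Ca / c) * T * ‖w‖ := by ring

end SesquilinearForm

theorem stmt_4_general {V : Type*} [NormedAddCommGroup V] [InnerProductSpace ℂ V] [CompleteSpace V]
    (a : V →ₗ[ℂ] V →ₗ⋆[ℂ] ℂ) (Ca : ℝ) (hCa : 0 < Ca)
    (hbound : ∀ u w : V, ‖a u w‖ ≤ Ca * ‖u‖ * ‖w‖)
    (α : ℝ)
    (hinfsup : ∀ u : V, α * ‖u‖ ≤ ⨆ w : {w : V // w ≠ 0}, (a u w.1).re / ‖w.1‖)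
    (V₀ : Submodule ℂ V) (hV₀ : IsClosed (V₀ : Set V))
    (c : ℝ) (hc : 0 < c) (hcoerc : ∀ w ∈ V₀, c * ‖w‖ ^ 2 ≤ (a w w).re)
    (g : V →ₗ⋆[ℂ] ℂ)
    (φ : V) (hφ : ∀ w : V, a φ w = g w)
    (φloc : V) (hφloc : φloc ∈ V₀) (hφloceq : ∀ w ∈ V₀, a φloc w = g w) :
    α * ‖φ - φloc‖ ≤
        (1 + Ca / c) * (⨆ y : {y : V // (∀ w ∈ V₀, a w y = 0) ∧ y ≠ 0}, ‖g y.1‖ / ‖y.1‖) ∧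
      (⨆ y : {y : V // (∀ w ∈ V₀, a w y = 0) ∧ y ≠ 0}, ‖g y.1‖ / ‖y.1‖) ≤
        Ca * ‖φ - φloc‖ := by
  set e := φ - φloc
  have horth : ∀ v ∈ V₀, a e v = 0 := fun v hv => by
    rw [map_sub, LinearMap.sub_apply, hφ, hφloceq v hv, sub_self]
  have hgY : ∀ y, (∀ w ∈ V₀, a w y = 0) → g y = a e y := fun y hy => by
    rw [map_sub, LinearMap.sub_apply, hφ, hy φloc hφloc, sub_zero]
  change α * ‖e‖ ≤ (1 + Ca / c) * dualNormOn (fun y => ∀ w ∈ V₀, a w y = 0) g ∧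
    dualNormOn (fun y => ∀ w ∈ V₀, a w y = 0) g ≤ Ca * ‖e‖
  rw [dualNormOn_congr hgY]
  refine ⟨(hinfsup e).trans (Real.iSup_le (fun w => ?_) ?_),
    dualNormOn_le (by positivity) fun y _ => hbound e y⟩
  · rw [div_le_iff₀ (norm_pos_iff.2 w.2)]
    exact (Complex.re_le_norm _).trans
      (norm_apply_le_dualNormOn_mul a V₀ hbound hCa.le hV₀ hc hcoerc horth w)
  · exact mul_nonneg (by positivity) dualNormOn_nonneg

/-- Two-sided bound for the localization error: with
`‖g‖_{Y'} := sup_{y ∈ Y, y ≠ 0} |g(y)|/‖y‖`, one has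
`α‖φ − φ^loc‖ ≤ (1 + C_a/c)‖g‖_{Y'}` and `‖g‖_{Y'} ≤ C_a‖φ − φ^loc‖`. -/
theorem stmt_4 {V : Type*} [NormedAddCommGroup V] [InnerProductSpace ℂ V] [CompleteSpace V]
    (a : V →ₗ[ℂ] V →ₗ⋆[ℂ] ℂ) (Ca : ℝ) (hCa : 0 < Ca)
    (hbound : ∀ u w : V, ‖a u w‖ ≤ Ca * ‖u‖ * ‖w‖)
    (α : ℝ) (hα : 0 < α)
    (hinfsup : ∀ u : V, α * ‖u‖ ≤ ⨆ w : {w : V // w ≠ 0}, (a u w.1).re / ‖w.1‖)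
    (V₀ : Submodule ℂ V) (hV₀ : IsClosed (V₀ : Set V))
    (c : ℝ) (hc : 0 < c) (hcoerc : ∀ w ∈ V₀, c * ‖w‖ ^ 2 ≤ (a w w).re)
    (g : V →ₗ⋆[ℂ] ℂ) (Cg : ℝ) (hg : ∀ w : V, ‖g w‖ ≤ Cg * ‖w‖)
    (φ : V) (hφ : ∀ w : V, a φ w = g w)
    (φloc : V) (hφloc : φloc ∈ V₀) (hφloceq : ∀ w ∈ V₀, a φloc w = g w) :
    α * ‖φ - φloc‖ ≤
        (1 + Ca / c) * (⨆ y : {y : V // (∀ w ∈ V₀, a w y = 0) ∧ y ≠ 0}, ‖g y.1‖ / ‖y.1‖) ∧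
      (⨆ y : {y : V // (∀ w ∈ V₀, a w y = 0) ∧ y ≠ 0}, ‖g y.1‖ / ‖y.1‖) ≤
        Ca * ‖φ - φloc‖ :=
  stmt_4_general a Ca hCa hbound α hinfsup V₀ hV₀ c hc hcoerc g φ hφ φloc hφloc hφloceq
end

section
/- Let V be a complex normed space and a : V × V → ℂ a bounded sesquilinear form with bound C_a. Let U, W ⊆ V be subspaces such that a satisfies the discrete inf-sup condition with constant β > 0 on (U, W): for every u ∈ U with u ≠ 0 there exists w ∈ W with w ≠ 0 and Re a(u, w) ≥ β‖u‖‖w‖. Let ι : U → V and ι* : W → V be linear maps satisfying ‖ιu − u‖ ≤ ε‖u‖ for all u ∈ U and ‖ι*w − w‖ ≤ ε‖w‖ for all w ∈ W, where 0 ≤ ε ≤ min{1/2, β/(27·C_a)}. Then a satisfies the discrete inf-sup condition on the perturbed pair (ι(U), ι*(W)) with constant β/9: for every u' ∈ ι(U) with u' ≠ 0 there exists w' ∈ ι*(W) with w' ≠ 0 and Re a(u', w') ≥ (β/9)‖u'‖‖w'‖. -/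
/-- Abstract stability theorem (inf-sup stability of the super-localized
Petrov–Galerkin method): perturbing a discretely inf-sup stable pair `(U, W)`
by maps `ι, ι*` with relative perturbation `ε ≤ min{1/2, β/(27 C_a)}` yields a
pair `(ι(U), ι*(W))` that is discretely inf-sup stable with constant `β/9`. -/
theorem stmt_5 {V : Type*} [NormedAddCommGroup V] [NormedSpace ℂ V]
    (a : V →ₗ[ℂ] V →ₗ⋆[ℂ] ℂ) (Ca : ℝ) (hCa : 0 < Ca)
    (hbound : ∀ u w : V, ‖a u w‖ ≤ Ca * ‖u‖ * ‖w‖)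
    (U W : Submodule ℂ V) (β : ℝ) (hβ : 0 < β)
    (hinfsup : ∀ u ∈ U, u ≠ 0 → ∃ w ∈ W, w ≠ 0 ∧ β * ‖u‖ * ‖w‖ ≤ (a u w).re)
    (ι : U →ₗ[ℂ] V) (ιs : W →ₗ[ℂ] V) (ε : ℝ)
    (hε0 : 0 ≤ ε) (hε : ε ≤ min (1 / 2) (β / (27 * Ca)))
    (hι : ∀ u : U, ‖ι u - (u : V)‖ ≤ ε * ‖(u : V)‖)
    (hιs : ∀ w : W, ‖ιs w - (w : V)‖ ≤ ε * ‖(w : V)‖) :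
    ∀ u' ∈ LinearMap.range ι, u' ≠ 0 →
      ∃ w' ∈ LinearMap.range ιs, w' ≠ 0 ∧ (β / 9) * ‖u'‖ * ‖w'‖ ≤ (a u' w').re := by
  rintro u' ⟨u, rfl⟩ hu'ne
  have hε12 : ε ≤ 1 / 2 := le_trans hε (min_le_left _ _)
  have hεβ : ε ≤ β / (27 * Ca) := le_trans hε (min_le_right _ _)
  have hCaε : Ca * ε ≤ β / 27 := by
    have h27 : (0:ℝ) < 27 * Ca := by positivity
    have := (le_div_iff₀ h27).mp hεβ
    nlinarith
  have hune : (u : V) ≠ 0 := by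
    intro h
    apply hu'ne
    have : u = 0 := Subtype.ext h
    simp [this]
  obtain ⟨w, hwW, hwne, hw⟩ := hinfsup (u : V) u.2 hune
  set wW : W := ⟨w, hwW⟩
  refine ⟨ιs wW, ⟨wW, rfl⟩, ?_, ?_⟩
  · -- ιs wW ≠ 0
    have h2 := hιs wW
    have hnw : 0 < ‖w‖ := norm_pos_iff.mpr hwne
    intro h
    have : ‖w‖ ≤ ε * ‖w‖ := by
      calc ‖w‖ = ‖-(ιs wW - w)‖ := by rw [h] at *; simp
        _ = ‖ιs wW - (wW : V)‖ := by rw [norm_neg]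
        _ ≤ ε * ‖(wW : V)‖ := h2
    nlinarith
  · have hnu : 0 < ‖(u : V)‖ := norm_pos_iff.mpr hune
    have hnw : 0 < ‖w‖ := norm_pos_iff.mpr hwne
    have h1 := hι u
    have h2 := hιs wW
    set u' := ι u
    set w' := ιs wW
    have hu'le : ‖u'‖ ≤ (1 + ε) * ‖(u : V)‖ := by
      calc ‖u'‖ = ‖(u' - (u : V)) + (u : V)‖ := by rw [sub_add_cancel]
        _ ≤ ‖u' - (u : V)‖ + ‖(u : V)‖ := norm_add_le _ _
        _ ≤ ε * ‖(u : V)‖ + ‖(u : V)‖ := by linarith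
        _ = (1 + ε) * ‖(u : V)‖ := by ring
    have hw'le : ‖w'‖ ≤ (1 + ε) * ‖w‖ := by
      calc ‖w'‖ = ‖(w' - w) + w‖ := by rw [sub_add_cancel]
        _ ≤ ‖w' - w‖ + ‖w‖ := norm_add_le _ _
        _ ≤ ε * ‖w‖ + ‖w‖ := by linarith [h2]
        _ = (1 + ε) * ‖w‖ := by ring
    -- decomposition
    have key : a u' w' = a (u : V) w + a (u' - (u : V)) w + a u' (w' - w) := by
      simp [map_sub, LinearMap.sub_apply]
    have e1 : -(Ca * (ε * ‖(u : V)‖) * ‖w‖) ≤ (a (u' - (u : V)) w).re := by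
      have hb := hbound (u' - (u : V)) w
      have hb2 : ‖a (u' - (u : V)) w‖ ≤ Ca * (ε * ‖(u : V)‖) * ‖w‖ := by
        refine hb.trans ?_
        gcongr
      have hre : |(a (u' - (u : V)) w).re| ≤ ‖a (u' - (u : V)) w‖ :=
        Complex.abs_re_le_norm _
      have := abs_le.mp (hre.trans hb2)
      linarith [this.1]
    have e2 : -(Ca * ((1 + ε) * ‖(u : V)‖) * (ε * ‖w‖)) ≤ (a u' (w' - w)).re := by
      have hb := hbound u' (w' - w)
      have hb2 : ‖a u' (w' - w)‖ ≤ Ca * ((1 + ε) * ‖(u : V)‖) * (ε * ‖w‖) := by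
        refine hb.trans ?_
        gcongr
      have hre : |(a u' (w' - w)).re| ≤ ‖a u' (w' - w)‖ :=
        Complex.abs_re_le_norm _
      have := abs_le.mp (hre.trans hb2)
      linarith [this.1]
    have hre : (a u' w').re
        = (a (u : V) w).re + (a (u' - (u : V)) w).re + (a u' (w' - w)).re := by
      rw [key]; simp
    rw [hre]
    have hw'nn : (0:ℝ) ≤ ‖w'‖ := norm_nonneg _
    have hu'nn : (0:ℝ) ≤ ‖u'‖ := norm_nonneg _
    have hN : (0:ℝ) ≤ ‖(u : V)‖ * ‖w‖ := mul_nonneg hnu.le hnw.le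
    have hprod : ‖u'‖ * ‖w'‖ ≤ (9 / 4) * (‖(u : V)‖ * ‖w‖) := by
      have h3 := mul_le_mul hu'le hw'le hw'nn (by positivity)
      nlinarith [mul_nonneg (by nlinarith : (0:ℝ) ≤ 9 / 4 - (1 + ε) ^ 2) hN]
    have hc1 : Ca * (ε * ‖(u : V)‖) * ‖w‖ ≤ (β / 27) * (‖(u : V)‖ * ‖w‖) := by
      calc Ca * (ε * ‖(u : V)‖) * ‖w‖ = (Ca * ε) * (‖(u : V)‖ * ‖w‖) := by ring
        _ ≤ (β / 27) * (‖(u : V)‖ * ‖w‖) := mul_le_mul_of_nonneg_right hCaε hN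
    have hc2' : Ca * (1 + ε) * ε ≤ β / 18 := by nlinarith
    have hc2 : Ca * ((1 + ε) * ‖(u : V)‖) * (ε * ‖w‖)
        ≤ (β / 18) * (‖(u : V)‖ * ‖w‖) := by
      calc Ca * ((1 + ε) * ‖(u : V)‖) * (ε * ‖w‖)
          = (Ca * (1 + ε) * ε) * (‖(u : V)‖ * ‖w‖) := by ring
        _ ≤ (β / 18) * (‖(u : V)‖ * ‖w‖) := mul_le_mul_of_nonneg_right hc2' hN
    have hfin := mul_le_mul_of_nonneg_left hprod (by positivity : (0:ℝ) ≤ β / 9)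
    nlinarith [mul_nonneg hβ.le hN]
end

section
/- Let H be a complex Hilbert space, V ⊆ H a subspace equipped with a norm ‖·‖ satisfying ‖v‖_H ≤ κ⁻¹‖v‖ for all v ∈ V with κ > 0, and a : V × V → ℂ a bounded sesquilinear form with bound C_a. Let U, W ⊆ V be subspaces such that a satisfies the discrete inf-sup condition with constant β > 0 on (U, W), and let ι : U → V and ι* : W → V be linear maps satisfying ‖ιu − u‖ ≤ ε‖u‖ for all u ∈ U and ‖ι*w − w‖ ≤ ε‖w‖ for all w ∈ W, where 0 ≤ ε ≤ min{1/2, β/(27·C_a)}. Let f ∈ H, let u ∈ V satisfy a(u, v) = (f, v)_H for all v ∈ V, let u_H ∈ U satisfy a(u_H, w) = (f, w)_H for all w ∈ W, and let u' ∈ ι(U) satisfy a(u', w') = (f, w')_H for all w' ∈ ι*(W). Then ‖u − u'‖ ≤ ‖u − u_H‖ + 14·(1 + C_a/β)·β⁻¹·κ⁻¹·ε·‖f‖_H. -/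
/-!
Write `u' = ι u₀` with `u₀ ∈ U`. Tested against `w ∈ W`, the residual of `u_H - u₀` splits into
the load and the form evaluated on the perturbations `w - ι* w` and `ι u₀ - u₀`, so it is of size
`O(ε)`; the inf-sup condition turns this into `‖u_H - u₀‖ = O(ε)`. Since `27 C_a ε ≤ β`, the
`‖u₀‖`-dependent part of that bound is absorbed, and the triangle inequality through `u_H` finishes.
-/

namespace PetrovGalerkin

def InfSupCondition {V : Type*} [NormedAddCommGroup V] [Module ℂ V]
    (a : V →ₗ[ℂ] V →ₗ⋆[ℂ] ℂ) (U W : Submodule ℂ V) (β : ℝ) : Prop :=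
  ∀ u ∈ U, u ≠ 0 → ∃ w ∈ W, w ≠ 0 ∧ β * ‖u‖ * ‖w‖ ≤ (a u w).re

theorem InfSupCondition.mul_norm_le {V : Type*} [NormedAddCommGroup V] [Module ℂ V]
    {a : V →ₗ[ℂ] V →ₗ⋆[ℂ] ℂ} {U W : Submodule ℂ V} {β : ℝ}
    (h : InfSupCondition a U W β) {x : V} (hx : x ∈ U) {C : ℝ} (hC : 0 ≤ C)
    (hxC : ∀ w ∈ W, ‖a x w‖ ≤ C * ‖w‖) : β * ‖x‖ ≤ C := by
  by_cases hx0 : x = 0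
  · simpa [hx0] using hC
  obtain ⟨w, hw, hw0, hβ⟩ := h x hx hx0
  refine le_of_mul_le_mul_right ?_ (norm_pos_iff.mpr hw0)
  calc β * ‖x‖ * ‖w‖ ≤ (a x w).re := hβ
    _ ≤ ‖a x w‖ := Complex.re_le_norm _
    _ ≤ C * ‖w‖ := hxC w hw

theorem apply_sub_eq_of_galerkin {V : Type*} [AddCommGroup V] [Module ℂ V]
    (a : V →ₗ[ℂ] V →ₗ⋆[ℂ] ℂ) (ℓ : V →ₗ⋆[ℂ] ℂ) {x y y' w w' : V}
    (hx : a x w = ℓ w) (hy' : a y' w' = ℓ w') :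
    a (x - y) w = ℓ (w - w') + a y' (w' - w) + a (y' - y) w := by
  simp only [map_sub, LinearMap.sub_apply, hx, hy']
  ring

theorem norm_apply_sub_le_of_galerkin {V : Type*} [SeminormedAddCommGroup V] [Module ℂ V]
    {a : V →ₗ[ℂ] V →ₗ⋆[ℂ] ℂ} {Ca : ℝ} (hCa : 0 ≤ Ca)
    (hbound : ∀ u w : V, ‖a u w‖ ≤ Ca * ‖u‖ * ‖w‖) {ℓ : V →ₗ⋆[ℂ] ℂ} {L : ℝ} (hL : 0 ≤ L)
    (hℓ : ∀ v, ‖ℓ v‖ ≤ L * ‖v‖) {ε : ℝ} {x y y' w w' : V}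
    (hx : a x w = ℓ w) (hy' : a y' w' = ℓ w')
    (hyy' : ‖y' - y‖ ≤ ε * ‖y‖) (hww' : ‖w' - w‖ ≤ ε * ‖w‖) :
    ‖a (x - y) w‖ ≤ ε * (L + Ca * ‖y‖ + Ca * ‖y'‖) * ‖w‖ := by
  rw [apply_sub_eq_of_galerkin a ℓ hx hy']
  calc ‖ℓ (w - w') + a y' (w' - w) + a (y' - y) w‖
      ≤ ‖ℓ (w - w')‖ + ‖a y' (w' - w)‖ + ‖a (y' - y) w‖ := norm_add₃_le
    _ ≤ L * ‖w' - w‖ + Ca * ‖y'‖ * ‖w' - w‖ + Ca * ‖y' - y‖ * ‖w‖ := by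
        gcongr
        · exact norm_sub_rev w w' ▸ hℓ _
        · exact hbound _ _
        · exact hbound _ _
    _ ≤ L * (ε * ‖w‖) + Ca * ‖y'‖ * (ε * ‖w‖) + Ca * (ε * ‖y‖) * ‖w‖ := by gcongr
    _ = ε * (L + Ca * ‖y‖ + Ca * ‖y'‖) * ‖w‖ := by ring

theorem norm_sub_le_of_perturbation {E : Type*} [SeminormedAddCommGroup E] {x y z : E}
    {β Ca ε M : ℝ} (hβ : 0 < β) (hCa : 0 ≤ Ca) (hε0 : 0 ≤ ε) (hε : ε ≤ 1 / 2)
    (hεCa : 27 * Ca * ε ≤ β) (hx : β * ‖x‖ ≤ M) (hzy : ‖z - y‖ ≤ ε * ‖y‖)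
    (hxy : β * ‖x - y‖ ≤ ε * (M + Ca * ‖y‖ + Ca * ‖z‖)) :
    ‖x - z‖ ≤ 14 * (1 + Ca / β) * β⁻¹ * ε * M := by
  have hy : ‖y‖ ≤ ‖x‖ + ‖x - y‖ := by simpa [norm_sub_rev] using norm_le_insert' y x
  have hz : ‖z‖ ≤ ‖y‖ + ε * ‖y‖ := (norm_le_insert' z y).trans (by gcongr)
  have hxz : ‖x - z‖ ≤ ‖x - y‖ + ε * ‖y‖ :=
    (norm_sub_le_norm_sub_add_norm_sub x y z).trans (by rw [norm_sub_rev y z]; gcongr)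
  have hCaε : 0 ≤ Ca * ε := mul_nonneg hCa hε0
  have hxy' : 49 * (β * ‖x - y‖) ≤ 54 * ε * M + 135 * Ca * ε * ‖x‖ := by
    nlinarith [mul_le_mul_of_nonneg_left hy hCaε, mul_le_mul_of_nonneg_left hz hCaε,
      mul_le_mul_of_nonneg_right hε (mul_nonneg hCaε (norm_nonneg y)),
      mul_le_mul_of_nonneg_right hεCa (norm_nonneg (x - y))]
  have hM : 0 ≤ M := (mul_nonneg hβ.le (norm_nonneg x)).trans hx
  have hD : 49 * (β ^ 2 * ‖x - y‖) ≤ 54 * ε * β * M + 135 * Ca * ε * M := by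
    nlinarith [mul_le_mul_of_nonneg_left hxy' hβ.le, mul_le_mul_of_nonneg_left hx hCaε]
  have hT : β ^ 2 * ‖x - z‖ ≤ 3 / 2 * (β ^ 2 * ‖x - y‖) + ε * β * M := by
    nlinarith [mul_le_mul_of_nonneg_left hxz (sq_nonneg β),
      mul_le_mul_of_nonneg_left hy (mul_nonneg hε0 hβ.le), mul_le_mul_of_nonneg_left hx hε0,
      mul_le_mul_of_nonneg_right hε (mul_nonneg (sq_nonneg β) (norm_nonneg (x - y)))]
  rw [show 14 * (1 + Ca / β) * β⁻¹ * ε * M = 14 * ε * (β + Ca) * M / β ^ 2 by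
    field_simp, le_div_iff₀ (by positivity)]
  nlinarith [mul_nonneg (mul_nonneg hε0 hβ.le) hM, mul_nonneg hCaε hM]

end PetrovGalerkin

theorem stmt_6_general {Hs : Type*} [NormedAddCommGroup Hs] [InnerProductSpace ℂ Hs]
    {V : Type*} [NormedAddCommGroup V] [NormedSpace ℂ V]
    (e : V →ₗ[ℂ] Hs)
    (κ : ℝ) (hκ : 0 < κ) (hemb : ∀ v : V, ‖e v‖ ≤ κ⁻¹ * ‖v‖)
    (a : V →ₗ[ℂ] V →ₗ⋆[ℂ] ℂ) (Ca : ℝ) (hCa : 0 < Ca)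
    (hbound : ∀ u w : V, ‖a u w‖ ≤ Ca * ‖u‖ * ‖w‖)
    (U W : Submodule ℂ V) (β : ℝ) (hβ : 0 < β)
    (hinfsup : ∀ u ∈ U, u ≠ 0 → ∃ w ∈ W, w ≠ 0 ∧ β * ‖u‖ * ‖w‖ ≤ (a u w).re)
    (ι : U →ₗ[ℂ] V) (ιs : W →ₗ[ℂ] V) (ε : ℝ)
    (hε0 : 0 ≤ ε) (hε : ε ≤ min (1 / 2) (β / (27 * Ca)))
    (hι : ∀ u : U, ‖ι u - (u : V)‖ ≤ ε * ‖(u : V)‖)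
    (hιs : ∀ w : W, ‖ιs w - (w : V)‖ ≤ ε * ‖(w : V)‖)
    (f : Hs)
    (u : V)
    (uH : V) (huH : uH ∈ U) (huHeq : ∀ w ∈ W, a uH w = (inner ℂ (e w) f : ℂ))
    (u' : V) (hu' : u' ∈ LinearMap.range ι)
    (hu'eq : ∀ w' ∈ LinearMap.range ιs, a u' w' = (inner ℂ (e w') f : ℂ)) :
    ‖u - u'‖ ≤ ‖u - uH‖ + 14 * (1 + Ca / β) * β⁻¹ * κ⁻¹ * ε * ‖f‖ := by
  obtain ⟨u₀, rfl⟩ := hu'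
  have hinfsup' : PetrovGalerkin.InfSupCondition a U W β := hinfsup
  obtain ⟨hε₁, hε₂⟩ := le_min_iff.mp hε
  have hεCa : 27 * Ca * ε ≤ β := by
    linarith [(le_div_iff₀ (by positivity : (0 : ℝ) < 27 * Ca)).mp hε₂]
  let ℓ : V →ₗ⋆[ℂ] ℂ := ((innerₛₗ ℂ).flip f).comp e
  have hL : 0 ≤ κ⁻¹ * ‖f‖ := by positivity
  have hℓ (v : V) : ‖ℓ v‖ ≤ κ⁻¹ * ‖f‖ * ‖v‖ :=
    (norm_inner_le_norm (e v) f).trans <| by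
      rw [mul_right_comm]; exact mul_le_mul_of_nonneg_right (hemb v) (norm_nonneg f)
  have huH_le : β * ‖uH‖ ≤ κ⁻¹ * ‖f‖ :=
    hinfsup'.mul_norm_le huH hL fun w hw => huHeq w hw ▸ hℓ w
  have huH_sub : β * ‖uH - u₀‖ ≤ ε * (κ⁻¹ * ‖f‖ + Ca * ‖(u₀ : V)‖ + Ca * ‖ι u₀‖) :=
    hinfsup'.mul_norm_le (U.sub_mem huH u₀.2) (by positivity) fun w hw =>
      PetrovGalerkin.norm_apply_sub_le_of_galerkin hCa.le hbound hL hℓ (huHeq w hw)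
        (hu'eq _ ⟨⟨w, hw⟩, rfl⟩) (hι u₀) (hιs ⟨w, hw⟩)
  calc ‖u - ι u₀‖ ≤ ‖u - uH‖ + ‖uH - ι u₀‖ := norm_sub_le_norm_sub_add_norm_sub _ _ _
    _ ≤ ‖u - uH‖ + 14 * (1 + Ca / β) * β⁻¹ * ε * (κ⁻¹ * ‖f‖) := by
        gcongr
        exact PetrovGalerkin.norm_sub_le_of_perturbation hβ hCa.le hε0 hε₁ hεCa huH_le (hι u₀)
          huH_sub
    _ = ‖u - uH‖ + 14 * (1 + Ca / β) * β⁻¹ * κ⁻¹ * ε * ‖f‖ := by ring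

/-- Abstract convergence theorem for the super-localized Petrov–Galerkin
method: `‖u − u'‖ ≤ ‖u − u_H‖ + 14(1 + C_a/β)β⁻¹κ⁻¹ε‖f‖_H`. -/
theorem stmt_6 {Hs : Type*} [NormedAddCommGroup Hs] [InnerProductSpace ℂ Hs] [CompleteSpace Hs]
    {V : Type*} [NormedAddCommGroup V] [NormedSpace ℂ V]
    (e : V →ₗ[ℂ] Hs) (he : Function.Injective e)
    (κ : ℝ) (hκ : 0 < κ) (hemb : ∀ v : V, ‖e v‖ ≤ κ⁻¹ * ‖v‖)
    (a : V →ₗ[ℂ] V →ₗ⋆[ℂ] ℂ) (Ca : ℝ) (hCa : 0 < Ca)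
    (hbound : ∀ u w : V, ‖a u w‖ ≤ Ca * ‖u‖ * ‖w‖)
    (U W : Submodule ℂ V) (β : ℝ) (hβ : 0 < β)
    (hinfsup : ∀ u ∈ U, u ≠ 0 → ∃ w ∈ W, w ≠ 0 ∧ β * ‖u‖ * ‖w‖ ≤ (a u w).re)
    (ι : U →ₗ[ℂ] V) (ιs : W →ₗ[ℂ] V) (ε : ℝ)
    (hε0 : 0 ≤ ε) (hε : ε ≤ min (1 / 2) (β / (27 * Ca)))
    (hι : ∀ u : U, ‖ι u - (u : V)‖ ≤ ε * ‖(u : V)‖)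
    (hιs : ∀ w : W, ‖ιs w - (w : V)‖ ≤ ε * ‖(w : V)‖)
    (f : Hs)
    (u : V) (hu : ∀ w : V, a u w = (inner ℂ (e w) f : ℂ))
    (uH : V) (huH : uH ∈ U) (huHeq : ∀ w ∈ W, a uH w = (inner ℂ (e w) f : ℂ))
    (u' : V) (hu' : u' ∈ LinearMap.range ι)
    (hu'eq : ∀ w' ∈ LinearMap.range ιs, a u' w' = (inner ℂ (e w') f : ℂ)) :
    ‖u - u'‖ ≤ ‖u - uH‖ + 14 * (1 + Ca / β) * β⁻¹ * κ⁻¹ * ε * ‖f‖ :=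
  stmt_6_general e κ hκ hemb a Ca hCa hbound U W β hβ hinfsup ι ιs ε hε0 hε hι hιs f u uH huH huHeq
    u' hu' hu'eq
end

section
/- Let H be a complex Hilbert space and V ⊆ H a subspace equipped with a norm ‖·‖ such that ‖v‖_H ≤ κ⁻¹‖v‖ for all v ∈ V, where κ > 0. Let a : V × V → ℂ be a sesquilinear form satisfying the Gårding-type inequality Re a(v, v) + 2κ²‖v‖_H² ≥ ‖v‖² for all v ∈ V, and assume the adjoint problem is solvable with stability constant C_st > 0: for every f ∈ H there exists z ∈ V with a(w, z) = (w, f)_H for all w ∈ V and ‖z‖ ≤ C_st‖f‖_H. Then a is inf-sup stable: for every u ∈ V with u ≠ 0 there exists v ∈ V with v ≠ 0 and Re a(u, v) ≥ (1 + 2κC_st)⁻¹‖u‖‖v‖. -/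
/-!
Given `u`, solve the adjoint problem with right-hand side `u` and call the solution `z`, so that
`a(u, z) = ‖u‖_H²`. The test function `v = u + 2κ² z` then turns the Gårding inequality into the
coercivity estimate `‖u‖² ≤ Re a(u, v)`, while the stability of the adjoint solution and the
embedding `‖u‖_H ≤ κ⁻¹‖u‖` give `‖v‖ ≤ (1 + 2κC_st)‖u‖`.
-/

section Sesquilinear

variable {V : Type*} [NormedAddCommGroup V] [NormedSpace ℂ V]

lemma re_apply_add_ofReal_smul (a : V →ₗ[ℂ] V →ₗ⋆[ℂ] ℂ) (u z : V) (c : ℝ) :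
    (a u (u + (c : ℂ) • z)).re = (a u u).re + c * (a u z).re := by
  rw [map_add, LinearMap.map_smulₛₗ, Complex.add_re, Complex.conj_ofReal, smul_eq_mul,
    Complex.re_ofReal_mul]

lemma ne_zero_of_sq_norm_le_re {a : V →ₗ[ℂ] V →ₗ⋆[ℂ] ℂ} {u v : V} (hu : u ≠ 0)
    (hlow : ‖u‖ ^ 2 ≤ (a u v).re) : v ≠ 0 := by
  rintro rfl
  exact hu (by simpa using hlow)

lemma inv_mul_norm_mul_norm_le_re {a : V →ₗ[ℂ] V →ₗ⋆[ℂ] ℂ} {u v : V} {M : ℝ} (hM : 0 < M)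
    (hlow : ‖u‖ ^ 2 ≤ (a u v).re) (hv : ‖v‖ ≤ M * ‖u‖) :
    M⁻¹ * ‖u‖ * ‖v‖ ≤ (a u v).re :=
  calc M⁻¹ * ‖u‖ * ‖v‖ ≤ M⁻¹ * ‖u‖ * (M * ‖u‖) := by gcongr
    _ = ‖u‖ ^ 2 := by field_simp
    _ ≤ (a u v).re := hlow

end Sesquilinear

section AdjointTestFunction

variable {H : Type*} [NormedAddCommGroup H] [InnerProductSpace ℂ H]
  {V : Type*} [NormedAddCommGroup V] [NormedSpace ℂ V]

lemma sq_norm_le_re_apply_add_smul_adjoint {e : V →ₗ[ℂ] H} {a : V →ₗ[ℂ] V →ₗ⋆[ℂ] ℂ} {κ : ℝ}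
    (hgarding : ∀ v : V, ‖v‖ ^ 2 ≤ (a v v).re + 2 * κ ^ 2 * ‖e v‖ ^ 2) {u z : V}
    (hz : ∀ w : V, a w z = inner ℂ (e u) (e w)) :
    ‖u‖ ^ 2 ≤ (a u (u + ((2 * κ ^ 2 : ℝ) : ℂ) • z)).re := by
  have hauz : (a u z).re = ‖e u‖ ^ 2 := by
    rw [hz u, inner_self_eq_norm_sq_to_K]
    norm_cast
  rw [re_apply_add_ofReal_smul, hauz]
  exact hgarding u

lemma norm_add_smul_adjoint_le {e : V →ₗ[ℂ] H} {κ Cst : ℝ} (hκ : 0 < κ) (hCst : 0 < Cst)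
    (hemb : ∀ v : V, ‖e v‖ ≤ κ⁻¹ * ‖v‖) {u z : V} (hz : ‖z‖ ≤ Cst * ‖e u‖) :
    ‖u + ((2 * κ ^ 2 : ℝ) : ℂ) • z‖ ≤ (1 + 2 * κ * Cst) * ‖u‖ := by
  have hz' : 2 * κ ^ 2 * ‖z‖ ≤ 2 * κ * Cst * ‖u‖ :=
    calc 2 * κ ^ 2 * ‖z‖ ≤ 2 * κ ^ 2 * (Cst * (κ⁻¹ * ‖u‖)) := by
          gcongr
          exact hz.trans (by gcongr; exact hemb u)
      _ = 2 * κ * Cst * ‖u‖ := by field_simp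
  calc ‖u + ((2 * κ ^ 2 : ℝ) : ℂ) • z‖ ≤ ‖u‖ + 2 * κ ^ 2 * ‖z‖ := by
        refine (norm_add_le _ _).trans_eq ?_
        rw [norm_smul, Complex.norm_real, Real.norm_of_nonneg (by positivity)]
    _ ≤ (1 + 2 * κ * Cst) * ‖u‖ := by linarith

end AdjointTestFunction

theorem stmt_8_general {Hs : Type*} [NormedAddCommGroup Hs] [InnerProductSpace ℂ Hs]
    {V : Type*} [NormedAddCommGroup V] [NormedSpace ℂ V]
    (e : V →ₗ[ℂ] Hs)
    (κ : ℝ) (hκ : 0 < κ) (hemb : ∀ v : V, ‖e v‖ ≤ κ⁻¹ * ‖v‖)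
    (a : V →ₗ[ℂ] V →ₗ⋆[ℂ] ℂ)
    (hgarding : ∀ v : V, ‖v‖ ^ 2 ≤ (a v v).re + 2 * κ ^ 2 * ‖e v‖ ^ 2)
    (Cst : ℝ) (hCst : 0 < Cst)
    (hadj : ∀ f : Hs, ∃ z : V, (∀ w : V, a w z = (inner ℂ f (e w) : ℂ)) ∧ ‖z‖ ≤ Cst * ‖f‖) :
    ∀ u : V, u ≠ 0 → ∃ v : V, v ≠ 0 ∧ (1 + 2 * κ * Cst)⁻¹ * ‖u‖ * ‖v‖ ≤ (a u v).re := by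
  intro u hu
  obtain ⟨z, hz, hz_le⟩ := hadj (e u)
  have hlow := sq_norm_le_re_apply_add_smul_adjoint hgarding hz
  have hv := norm_add_smul_adjoint_le hκ hCst hemb hz_le
  exact ⟨_, ne_zero_of_sq_norm_le_re hu hlow,
    inv_mul_norm_mul_norm_le_re (by positivity) hlow hv⟩

/-- Inf-sup stability from a Gårding-type inequality and solvability of the
adjoint problem with stability constant `C_st`: the inf-sup constant is
`(1 + 2κC_st)⁻¹`. -/
theorem stmt_8 {Hs : Type*} [NormedAddCommGroup Hs] [InnerProductSpace ℂ Hs]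
    {V : Type*} [NormedAddCommGroup V] [NormedSpace ℂ V]
    (e : V →ₗ[ℂ] Hs) (he : Function.Injective e)
    (κ : ℝ) (hκ : 0 < κ) (hemb : ∀ v : V, ‖e v‖ ≤ κ⁻¹ * ‖v‖)
    (a : V →ₗ[ℂ] V →ₗ⋆[ℂ] ℂ)
    (hgarding : ∀ v : V, ‖v‖ ^ 2 ≤ (a v v).re + 2 * κ ^ 2 * ‖e v‖ ^ 2)
    (Cst : ℝ) (hCst : 0 < Cst)
    (hadj : ∀ f : Hs, ∃ z : V, (∀ w : V, a w z = (inner ℂ f (e w) : ℂ)) ∧ ‖z‖ ≤ Cst * ‖f‖) :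
    ∀ u : V, u ≠ 0 → ∃ v : V, v ≠ 0 ∧ (1 + 2 * κ * Cst)⁻¹ * ‖u‖ * ‖v‖ ≤ (a u v).re :=
  stmt_8_general e κ hκ hemb a hgarding Cst hCst hadj
end

section
/- Let H be a complex Hilbert space, V ⊆ H a subspace equipped with a norm ‖·‖ such that ‖v‖_H ≤ κ⁻¹‖v‖ for all v ∈ V with κ > 0, and a : V × V → ℂ a sesquilinear form satisfying Re a(v, v) = ‖v‖² − 2κ²‖v‖_H² for all v ∈ V. Let Q ⊆ H be a closed subspace with orthogonal projection Π : H → Q satisfying the approximation property ‖v − Πv‖_H ≤ (H̄/π)·(‖v‖² − κ²‖v‖_H²)^{1/2} for all v ∈ V, where H̄ > 0 satisfies the resolution condition κH̄ ≤ π/√2. Assume for every q ∈ Q there exists L*q ∈ V with a(w, L*q) = (w, q)_H for all w ∈ V. Let f ∈ H and let u ∈ V satisfy a(u, v) = (f, v)_H for all v ∈ V. Suppose u_H ∈ V is such that there exists g ∈ Q with a(u_H, v) = (g, v)_H for all v ∈ V, and u_H satisfies the Petrov–Galerkin equations a(u_H, L*q) = (f, L*q)_H for all q ∈ Q. Then ‖u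 − u_H‖ ≤ (√6/π)·H̄·‖f − Πf‖_H. -/
/-!
Let `z = u - u_H`. Testing with the adjoint solutions `L*q` gives Galerkin orthogonality
`e z ⊥ Q`, so `Π (e z) = 0` and the approximation property bounds `‖e z‖_H` by `(H̄/π)·s`,
where `s² = ‖z‖² - κ²‖e z‖²`; orthogonality also turns `a(z, z)` into `(e z, f - Πf)_H`.
The resolution condition gives `κ²‖e z‖²_H ≤ s²/2`, so `Re a(z, z) ≥ s²/2` and
`s²/2 ≤ ‖e z‖_H ‖f - Πf‖_H ≤ (H̄/π) s ‖f - Πf‖_H`, i.e. `s ≤ 2(H̄/π)‖f - Πf‖_H`.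
Finally `‖z‖² = s² + κ²‖e z‖²_H ≤ (3/2) s²`.
-/

open Real

lemma sq_mul_sq_div_le_half {κ h y : ℝ} (hκh : 0 ≤ κ * h) (hy : 0 < y) (hres : κ * h ≤ y / √2) :
    κ ^ 2 * (h / y) ^ 2 ≤ 1 / 2 := by
  have hsq : (κ * h * √2) ^ 2 ≤ y ^ 2 :=
    pow_le_pow_left₀ (by positivity) ((le_div_iff₀ (by positivity)).mp hres) 2
  rw [mul_pow, mul_pow, sq_sqrt zero_le_two] at hsq
  rw [div_pow, ← mul_div_assoc, div_le_iff₀ (by positivity)]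
  linarith

lemma le_sqrt_six_mul_of_energy_bounds {Z E F c κ : ℝ} (hE : 0 ≤ E) (hF : 0 ≤ F) (hc : 0 ≤ c)
    (hres : κ ^ 2 * c ^ 2 ≤ 1 / 2) (hemb : κ ^ 2 * E ^ 2 ≤ Z ^ 2)
    (happrox : E ≤ c * √(Z ^ 2 - κ ^ 2 * E ^ 2)) (henergy : Z ^ 2 - 2 * κ ^ 2 * E ^ 2 ≤ E * F) :
    Z ≤ √6 * c * F := by
  set s := √(Z ^ 2 - κ ^ 2 * E ^ 2)
  have hs : 0 ≤ s := sqrt_nonneg _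
  have hs2 : s ^ 2 = Z ^ 2 - κ ^ 2 * E ^ 2 := sq_sqrt (by linarith)
  have hκE : κ ^ 2 * E ^ 2 ≤ s ^ 2 / 2 :=
    calc κ ^ 2 * E ^ 2 ≤ κ ^ 2 * (c * s) ^ 2 := by gcongr
      _ = κ ^ 2 * c ^ 2 * s ^ 2 := by ring
      _ ≤ s ^ 2 / 2 := by nlinarith [sq_nonneg s]
  have hs2F : s * s ≤ s * (2 * c * F) := by
    nlinarith [mul_le_mul_of_nonneg_right happrox hF]
  have hsF : s ≤ 2 * c * F := by
    rcases hs.eq_or_lt with hs0 | hs0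
    · rw [← hs0]; positivity
    · exact le_of_mul_le_mul_left hs2F hs0
  have hZ2 : Z ^ 2 ≤ (√6 * c * F) ^ 2 := by
    rw [mul_pow, mul_pow, sq_sqrt (by norm_num : (0 : ℝ) ≤ 6)]
    nlinarith [pow_le_pow_left₀ hs hsF 2]
  exact (le_abs_self Z).trans (abs_le_of_sq_le_sq hZ2 (by positivity))

lemma mem_orthogonal_of_adjoint_eq_zero {𝕜 Hs V : Type*} [RCLike 𝕜] [NormedAddCommGroup Hs]
    [InnerProductSpace 𝕜 Hs] [AddCommGroup V] [Module 𝕜 V] (e : V →ₗ[𝕜] Hs)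
    (a : V →ₗ[𝕜] V →ₗ⋆[𝕜] 𝕜) (Q : Submodule 𝕜 Hs) (Ls : Q → V)
    (hLs : ∀ q : Q, ∀ w : V, a w (Ls q) = inner 𝕜 (q : Hs) (e w))
    {z : V} (hz : ∀ q : Q, a z (Ls q) = 0) : e z ∈ Qᗮ :=
  (Submodule.mem_orthogonal Q _).mpr fun q hq => hLs ⟨q, hq⟩ z ▸ hz ⟨q, hq⟩

lemma inner_sub_orthogonalProjectionOnto_of_mem_orthogonal {𝕜 E : Type*} [RCLike 𝕜]
    [NormedAddCommGroup E] [InnerProductSpace 𝕜 E] {K : Submodule 𝕜 E} [K.HasOrthogonalProjection]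
    {x : E} (hx : x ∈ Kᗮ) (f : E) :
    inner 𝕜 x (f - (K.orthogonalProjectionOnto f : E)) = inner 𝕜 x f := by
  rw [inner_sub_right, Submodule.inner_left_of_mem_orthogonal (Submodule.coe_mem _) hx, sub_zero]

theorem stmt_9_general {Hs : Type*} [NormedAddCommGroup Hs] [InnerProductSpace ℂ Hs]
    {V : Type*} [NormedAddCommGroup V] [NormedSpace ℂ V]
    (e : V →ₗ[ℂ] Hs)
    (κ : ℝ) (hκ : 0 < κ) (hemb : ∀ v : V, ‖e v‖ ≤ κ⁻¹ * ‖v‖)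
    (a : V →ₗ[ℂ] V →ₗ⋆[ℂ] ℂ)
    (hre : ∀ v : V, (a v v).re = ‖v‖ ^ 2 - 2 * κ ^ 2 * ‖e v‖ ^ 2)
    (Q : Submodule ℂ Hs) [CompleteSpace Q]
    (Hbar : ℝ) (hHbar : 0 < Hbar) (hres : κ * Hbar ≤ Real.pi / Real.sqrt 2)
    (happrox : ∀ v : V, ‖e v - (Submodule.orthogonalProjection Q (e v) : Hs)‖ ≤
      (Hbar / Real.pi) * Real.sqrt (‖v‖ ^ 2 - κ ^ 2 * ‖e v‖ ^ 2))
    (Ls : Q → V) (hLs : ∀ q : Q, ∀ w : V, a w (Ls q) = (inner ℂ (q : Hs) (e w) : ℂ))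
    (f : Hs)
    (u : V) (hu : ∀ w : V, a u w = (inner ℂ (e w) f : ℂ))
    (uH : V) (huHsrc : ∃ g ∈ Q, ∀ w : V, a uH w = (inner ℂ (e w) g : ℂ))
    (huH : ∀ q : Q, a uH (Ls q) = (inner ℂ (e (Ls q)) f : ℂ)) :
    ‖u - uH‖ ≤ (Real.sqrt 6 / Real.pi) * Hbar * ‖f - (Submodule.orthogonalProjection Q f : Hs)‖ := by
  obtain ⟨g, hgQ, hg⟩ := huHsrc
  set z := u - uH
  change ‖z‖ ≤ _ * ‖f - (Q.orthogonalProjectionOnto f : Hs)‖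
  have hzQ : e z ∈ Qᗮ := mem_orthogonal_of_adjoint_eq_zero e a Q Ls hLs fun q => by
    rw [map_sub, LinearMap.sub_apply, hu, huH, sub_self]
  have henergy : a z z = inner ℂ (e z) (f - (Q.orthogonalProjectionOnto f : Hs)) := by
    rw [inner_sub_orthogonalProjectionOnto_of_mem_orthogonal hzQ, map_sub a u uH,
      LinearMap.sub_apply, hu, hg, Submodule.inner_left_of_mem_orthogonal hgQ hzQ, sub_zero]
  have hκz : κ * ‖e z‖ ≤ ‖z‖ := (le_inv_mul_iff₀ hκ).mp (hemb z)
  refine (le_sqrt_six_mul_of_energy_bounds (norm_nonneg (e z)) (norm_nonneg _) (by positivity)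
    (sq_mul_sq_div_le_half (by positivity) pi_pos hres) ?_ ?_ ?_).trans_eq (by ring)
  · simpa only [mul_pow] using pow_le_pow_left₀ (by positivity) hκz 2
  · simpa [Submodule.orthogonalProjectionOnto_apply_of_mem_orthogonal hzQ] using happrox z
  · rw [← hre z, henergy]
    exact (Complex.re_le_norm _).trans (norm_inner_le_norm _ _)

/-- Abstract form of the κ-independent error estimate for the prototypical
Petrov–Galerkin method: under the resolution condition `κH̄ ≤ π/√2` and the
projection approximation property, `‖u − u_H‖ ≤ (√6/π)·H̄·‖f − Πf‖_H`. -/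
theorem stmt_9 {Hs : Type*} [NormedAddCommGroup Hs] [InnerProductSpace ℂ Hs] [CompleteSpace Hs]
    {V : Type*} [NormedAddCommGroup V] [NormedSpace ℂ V]
    (e : V →ₗ[ℂ] Hs) (he : Function.Injective e)
    (κ : ℝ) (hκ : 0 < κ) (hemb : ∀ v : V, ‖e v‖ ≤ κ⁻¹ * ‖v‖)
    (a : V →ₗ[ℂ] V →ₗ⋆[ℂ] ℂ)
    (hre : ∀ v : V, (a v v).re = ‖v‖ ^ 2 - 2 * κ ^ 2 * ‖e v‖ ^ 2)
    (Q : Submodule ℂ Hs) [CompleteSpace Q]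
    (Hbar : ℝ) (hHbar : 0 < Hbar) (hres : κ * Hbar ≤ Real.pi / Real.sqrt 2)
    (happrox : ∀ v : V, ‖e v - (Submodule.orthogonalProjection Q (e v) : Hs)‖ ≤
      (Hbar / Real.pi) * Real.sqrt (‖v‖ ^ 2 - κ ^ 2 * ‖e v‖ ^ 2))
    (Ls : Q → V) (hLs : ∀ q : Q, ∀ w : V, a w (Ls q) = (inner ℂ (q : Hs) (e w) : ℂ))
    (f : Hs)
    (u : V) (hu : ∀ w : V, a u w = (inner ℂ (e w) f : ℂ))
    (uH : V) (huHsrc : ∃ g ∈ Q, ∀ w : V, a uH w = (inner ℂ (e w) g : ℂ))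
    (huH : ∀ q : Q, a uH (Ls q) = (inner ℂ (e (Ls q)) f : ℂ)) :
    ‖u - uH‖ ≤ (Real.sqrt 6 / Real.pi) * Hbar * ‖f - (Submodule.orthogonalProjection Q f : Hs)‖ :=
  stmt_9_general e κ hκ hemb a hre Q Hbar hHbar hres happrox Ls hLs f u hu uH huHsrc huH
end
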